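/- (Covering by forward parabolic boxes.) Fix j ∈ ℕ and (x₀, t₀) ∈ ℝⁿ × ℝ. For ℓ ≥ 1 define N_ℓ := (x₀, t₀ + (9^ℓ - 1)/8 · 4^{-j}) + (3^ℓ/2^j)·K₁ where K₁ = (-1,1)ⁿ × (0,1], and let Γ_∞ := ∪_{ℓ ≥ 1} N_ℓ. Then (x₀,t₀) + S⁻ ⊂ Γ_∞ ⊂ (x₀,t₀) + S⁺, where S⁻ := {(x,t) ∈ ℝⁿ × (4^{-j}, ∞) : t > (9|x|_∞² - 4^{-j})/8} and S⁺ := {(x,t) ∈ ℝⁿ × (4^{-j}, ∞) : t > (|x|_∞² - 4^{-j})/8}, with |x|_∞ := max_i |x_i|. -/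
import Mathlib


open Set

lemma sq_box (j ℓ : ℕ) : ((3:ℝ) ^ ℓ / 2 ^ j) ^ 2 = (9:ℝ) ^ ℓ * (4:ℝ) ^ (-(j:ℤ)) := by
  rw [div_pow, zpow_neg, zpow_natCast, ← pow_mul, ← pow_mul, mul_comm ℓ 2, mul_comm j 2,
    pow_mul, pow_mul, div_eq_mul_inv]
  norm_num

/-- The forward parabolic box `N_ℓ = (x₀, t₀ + (9^ℓ-1)/8 · 4^{-j}) + (3^ℓ/2^j) K₁`,
where `σ K₁ = (-σ,σ)ⁿ × (0, σ²]`. -/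
def Nbox (n j : ℕ) (x₀ : Fin n → ℝ) (t₀ : ℝ) (ℓ : ℕ) : Set ((Fin n → ℝ) × ℝ) :=
  {p | (∀ i, |p.1 i - x₀ i| < (3:ℝ) ^ ℓ / 2 ^ j) ∧
    t₀ + ((9:ℝ) ^ ℓ - 1) / 8 * (4:ℝ) ^ (-(j:ℤ)) < p.2 ∧
    p.2 ≤ t₀ + ((9:ℝ) ^ ℓ - 1) / 8 * (4:ℝ) ^ (-(j:ℤ)) + ((3:ℝ) ^ ℓ / 2 ^ j) ^ 2}

/-- `Γ_∞ = ⋃_{ℓ ≥ 1} N_ℓ`. -/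
def GammaInf (n j : ℕ) (x₀ : Fin n → ℝ) (t₀ : ℝ) : Set ((Fin n → ℝ) × ℝ) :=
  ⋃ (ℓ : ℕ) (_ : 1 ≤ ℓ), Nbox n j x₀ t₀ ℓ

/-- The translate `(x₀,t₀) + S⁻` of
`S⁻ = {(x,t) ∈ ℝⁿ × (4^{-j}, ∞) : t > (9|x|∞² - 4^{-j})/8}`. -/
def Sminus (n j : ℕ) (x₀ : Fin n → ℝ) (t₀ : ℝ) : Set ((Fin n → ℝ) × ℝ) :=
  {p | (4:ℝ) ^ (-(j:ℤ)) < p.2 - t₀ ∧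
    (9 * (⨆ i, |p.1 i - x₀ i|) ^ 2 - (4:ℝ) ^ (-(j:ℤ))) / 8 < p.2 - t₀}

/-- The translate `(x₀,t₀) + S⁺` of
`S⁺ = {(x,t) ∈ ℝⁿ × (4^{-j}, ∞) : t > (|x|∞² - 4^{-j})/8}`. -/
def Splus (n j : ℕ) (x₀ : Fin n → ℝ) (t₀ : ℝ) : Set ((Fin n → ℝ) × ℝ) :=
  {p | (4:ℝ) ^ (-(j:ℤ)) < p.2 - t₀ ∧
    ((⨆ i, |p.1 i - x₀ i|) ^ 2 - (4:ℝ) ^ (-(j:ℤ))) / 8 < p.2 - t₀}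

/-- Covering by forward parabolic boxes: `(x₀,t₀) + S⁻ ⊆ Γ_∞ ⊆ (x₀,t₀) + S⁺`. -/
theorem stmt18 (n j : ℕ) (hn : 1 ≤ n) (x₀ : Fin n → ℝ) (t₀ : ℝ) :
    Sminus n j x₀ t₀ ⊆ GammaInf n j x₀ t₀ ∧ GammaInf n j x₀ t₀ ⊆ Splus n j x₀ t₀ := by
  classical
  have hAeq : (4:ℝ) ^ (-(j:ℤ)) = ((4:ℝ) ^ j)⁻¹ := by
    rw [zpow_neg, zpow_natCast]
  have hA : (0:ℝ) < ((4:ℝ) ^ j)⁻¹ := by positivity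
  set A := ((4:ℝ) ^ j)⁻¹ with hAdef
  have hne : Nonempty (Fin n) := ⟨⟨0, hn⟩⟩
  have hsqb : ∀ ℓ : ℕ, ((3:ℝ) ^ ℓ / 2 ^ j) ^ 2 = (9:ℝ) ^ ℓ * A := by
    intro ℓ; rw [sq_box, hAeq]
  have h1le : ∀ ℓ : ℕ, (1:ℝ) ≤ (9:ℝ) ^ ℓ := fun ℓ => one_le_pow₀ (by norm_num)
  constructor
  · rintro ⟨x, t⟩ ⟨h1, h2⟩
    rw [hAeq] at h1 h2
    set s := t - t₀ with hs
    set M := ⨆ i, |x i - x₀ i| with hM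
    have hbdd : BddAbove (Set.range fun i => |x i - x₀ i|) :=
      (Set.finite_range _).bddAbove
    have hM0 : 0 ≤ M := le_trans (abs_nonneg _) (le_ciSup hbdd ⟨0, hn⟩)
    have hex : ∃ k : ℕ, s ≤ ((9:ℝ) ^ (k+1) - 1) / 8 * A := by
      obtain ⟨k, hk⟩ := pow_unbounded_of_one_lt (8 * s / A) (by norm_num : (1:ℝ) < 9)
      refine ⟨k, ?_⟩
      have h9 : (9:ℝ) ^ (k+1) = 9 * 9 ^ k := by ring
      have := (div_lt_iff₀ hA).mp hk
      nlinarith [h1le k]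
    set ℓ := Nat.find hex with hℓ
    have hspec : s ≤ ((9:ℝ) ^ (ℓ+1) - 1) / 8 * A := Nat.find_spec hex
    have hℓ1 : 1 ≤ ℓ := by
      rcases Nat.eq_zero_or_pos ℓ with h0 | h0
      · exfalso
        have := hspec
        rw [h0] at this
        norm_num at this
        nlinarith
      · exact h0
    have hlow : ((9:ℝ) ^ ℓ - 1) / 8 * A < s := by
      have hmin : ¬ s ≤ ((9:ℝ) ^ ((ℓ-1)+1) - 1) / 8 * A :=
        Nat.find_min hex (Nat.sub_lt hℓ1 one_pos)
      rw [Nat.sub_add_cancel hℓ1] at hmin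
      exact lt_of_not_ge hmin
    have hMlt : M < (3:ℝ) ^ ℓ / 2 ^ j := by
      have hsq : M ^ 2 < ((3:ℝ) ^ ℓ / 2 ^ j) ^ 2 := by
        rw [hsqb]
        have h9 : (9:ℝ) ^ (ℓ+1) = 9 * 9 ^ ℓ := by ring
        nlinarith
      have hpos : (0:ℝ) ≤ (3:ℝ) ^ ℓ / 2 ^ j := by positivity
      nlinarith
    refine Set.mem_iUnion.mpr ⟨ℓ, Set.mem_iUnion.mpr ⟨hℓ1, ?_, ?_, ?_⟩⟩
    · intro i
      exact lt_of_le_of_lt (le_ciSup hbdd i) hMlt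
    · show t₀ + ((9:ℝ) ^ ℓ - 1) / 8 * (4:ℝ) ^ (-(j:ℤ)) < t
      rw [hAeq]; linarith
    · show t ≤ t₀ + ((9:ℝ) ^ ℓ - 1) / 8 * (4:ℝ) ^ (-(j:ℤ)) + ((3:ℝ) ^ ℓ / 2 ^ j) ^ 2
      rw [hAeq, hsqb]
      have h9 : (9:ℝ) ^ (ℓ+1) = 9 * 9 ^ ℓ := by ring
      nlinarith
  · rintro ⟨x, t⟩ hmem
    obtain ⟨ℓ, hxall, hlow2, hℓ1, hhi⟩ := by
      simpa [GammaInf, Nbox, Set.mem_iUnion] using hmem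
    have hbdd : BddAbove (Set.range fun i => |x i - x₀ i|) :=
      (Set.finite_range _).bddAbove
    have hMle : (⨆ i, |x i - x₀ i|) ≤ (3:ℝ) ^ ℓ / 2 ^ j :=
      ciSup_le fun i => (hxall i).le
    have hM0 : 0 ≤ (⨆ i, |x i - x₀ i|) :=
      le_trans (abs_nonneg _) (le_ciSup hbdd ⟨0, hn⟩)
    have h9' : (9:ℝ) ≤ (9:ℝ) ^ ℓ := by
      calc (9:ℝ) = 9 ^ 1 := (pow_one 9).symm
      _ ≤ 9 ^ ℓ := pow_le_pow_right₀ (by norm_num) hℓ1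
    have hsqle : (⨆ i, |x i - x₀ i|) ^ 2 ≤ (9:ℝ) ^ ℓ * A := by
      rw [← hsqb]
      exact pow_le_pow_left₀ hM0 hMle 2
    refine ⟨?_, ?_⟩
    · show (4:ℝ) ^ (-(j:ℤ)) < t - t₀
      rw [hAeq]
      nlinarith [h1le ℓ]
    · show ((⨆ i, |x i - x₀ i|) ^ 2 - (4:ℝ) ^ (-(j:ℤ))) / 8 < t - t₀
      rw [hAeq]
      nlinarith [h1le ℓ]
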